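/- arXiv:2601.17187 — 4 statements merged into one kernel-verified Lean document; each statement's English description precedes it below -/
import Mathlib

section
/- (Zador's lower bound.) Let Λ ⊂ ℝⁿ be a full-rank lattice (a discrete subgroup spanning ℝⁿ) and let 𝒱_Λ = { x ∈ ℝⁿ : ‖x‖ ≤ ‖x − λ‖ for all λ ∈ Λ } be its Voronoi region, whose Lebesgue volume equals the covolume V of Λ. Define the second moment σ²(Λ) = (1/(nV)) ∫_{𝒱_Λ} ‖x‖² dx. Then σ²(Λ) ≥ (Γ(n/2+1)^{2/n} / ((n+2)π)) · V^{2/n}, where Γ is the gamma function. In particular, for a full-rank lattice L with point density γ(L) = covol(L)^{−1} and an invertible matrix U ∈ ℝ^{n×n}, σ²(UL) ≥ (Γ(n/2+1)^{2/n}/((n+2)π)) · γ(L)^{−2/n} · |det U|^{2/n}. -/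
/-!
Among all sets `S ⊆ ℝⁿ` of volume `V`, the ball minimizes `∫_S ‖x‖²`: by the layer-cake formula
`∫_S ‖x‖² = ∫₀^∞ vol (S ∩ {‖x‖² > t}) dt ≥ ∫₀^∞ (V - vol {‖x‖² ≤ t})⁺ dt`, and the right-hand side
is the value for the ball. The Voronoi region of a full-rank lattice is bounded, which gives the
first bound. For the second, `U 𝒱_Λ` and `𝒱_{UΛ}` are both fundamental domains of `UΛ` (the
Voronoi region is one, since bisecting hyperplanes are null), so
`vol 𝒱_{UΛ} = |det U| · vol 𝒱_Λ`.
-/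

open MeasureTheory

/-- The Voronoi region of a lattice `Λ ⊂ ℝⁿ` (points at least as close to `0` as to any
lattice point, in the Euclidean metric). -/
def voronoiRegion (n : ℕ) (Λ : AddSubgroup (Fin n → ℝ)) : Set (Fin n → ℝ) :=
  {x | ∀ l ∈ Λ, ∑ i, x i ^ 2 ≤ ∑ i, (x i - l i) ^ 2}

/-- The (normalized) second moment `σ²(Λ) = (1/(n·V)) ∫_{𝒱_Λ} ‖x‖² dx`, where `V` is the
Lebesgue volume of the Voronoi region (the covolume of the lattice). -/
noncomputable def latticeSecondMoment (n : ℕ) (Λ : AddSubgroup (Fin n → ℝ)) : ℝ :=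
  (1 / ((n : ℝ) * (volume (voronoiRegion n Λ)).toReal)) *
    ∫ x in voronoiRegion n Λ, ∑ i, x i ^ 2

open Real Set WithLp
open scoped Pointwise

section Euclidean

variable {ι : Type*} [Fintype ι]

theorem sum_sq_eq_norm_toLp_sq (x : ι → ℝ) : ∑ i, x i ^ 2 = ‖toLp 2 x‖ ^ 2 := by
  rw [EuclideanSpace.norm_eq, sq_sqrt (by positivity)]
  simp [sq_abs]

theorem sum_sq_sub_eq_dist_toLp_sq (x y : ι → ℝ) :
    ∑ i, (x i - y i) ^ 2 = dist (toLp 2 x) (toLp 2 y) ^ 2 := by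
  rw [EuclideanSpace.dist_eq, sq_sqrt (by positivity)]
  simp [Real.dist_eq, sq_abs]

theorem exists_forall_sum_sq_sub_le_of_isClosed {s : Set (ι → ℝ)} (hs : IsClosed s)
    (hne : s.Nonempty) (x : ι → ℝ) :
    ∃ g ∈ s, ∀ l ∈ s, ∑ i, (x i - g i) ^ 2 ≤ ∑ i, (x i - l i) ^ 2 := by
  have ht : IsClosed (ofLp ⁻¹' s : Set (EuclideanSpace ℝ ι)) :=
    hs.preimage (PiLp.continuous_ofLp 2 _)
  obtain ⟨y, hy, hxy⟩ := ht.exists_infDist_eq_dist (hne.preimage (ofLp_surjective 2)) (toLp 2 x)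
  refine ⟨ofLp y, hy, fun l hl => ?_⟩
  rw [sum_sq_sub_eq_dist_toLp_sq, sum_sq_sub_eq_dist_toLp_sq, toLp_ofLp, ← hxy]
  gcongr
  · exact Metric.infDist_nonneg
  · exact Metric.infDist_le_dist_of_mem (by simpa using hl)

theorem volume_setOf_sum_sq_sub_eq_eq_zero {a b : ι → ℝ} (hab : a ≠ b) :
    volume {x : ι → ℝ | ∑ i, (x i - a i) ^ 2 = ∑ i, (x i - b i) ^ 2} = 0 := by
  have hset : {x : ι → ℝ | ∑ i, (x i - a i) ^ 2 = ∑ i, (x i - b i) ^ 2} =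
      toLp 2 ⁻¹' AffineSubspace.perpBisector (toLp 2 a) (toLp 2 b) := by
    ext x
    simp [sum_sq_sub_eq_dist_toLp_sq, AffineSubspace.mem_perpBisector_iff_dist_eq]
  rw [hset]
  exact (PiLp.volume_preserving_toLp ι).quasiMeasurePreserving.preimage_null
    (Measure.addHaar_affineSubspace _ _ (by simpa using hab))

end Euclidean

theorem volume_setOf_sum_sq_le {n : ℕ} (hn : 0 < n) {s : ℝ} (hs : 0 ≤ s) :
    volume {x : Fin n → ℝ | ∑ i, x i ^ 2 ≤ s} =
      ENNReal.ofReal (√π ^ n / Gamma (n / 2 + 1) * s ^ ((n : ℝ) / 2)) := by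
  have : Nonempty (Fin n) := Fin.pos_iff_nonempty.mp hn
  have hset : {x : Fin n → ℝ | ∑ i, x i ^ 2 ≤ s} =
      toLp 2 ⁻¹' Metric.closedBall (0 : EuclideanSpace ℝ (Fin n)) √s := by
    ext x
    simp only [mem_ofPred_eq, mem_preimage, Metric.mem_closedBall, dist_zero_right,
      sum_sq_eq_norm_toLp_sq]
    exact (Real.le_sqrt (norm_nonneg _) hs).symm
  rw [hset, (PiLp.volume_preserving_toLp (Fin n)).measure_preimage
    measurableSet_closedBall.nullMeasurableSet, EuclideanSpace.volume_closedBall,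
    Fintype.card_fin, ← ENNReal.ofReal_pow (sqrt_nonneg s), ← ENNReal.ofReal_mul (by positivity),
    mul_comm, sqrt_eq_rpow s, ← rpow_natCast (s ^ _), ← rpow_mul hs]
  ring_nf

theorem lintegral_measure_sub_sublevel_le_setLIntegral {α : Type*} [MeasurableSpace α]
    (μ : Measure α) {f : α → ℝ} (hf : Measurable f) (hf0 : 0 ≤ f) (S : Set α) :
    ∫⁻ t in Ioi 0, (μ S - μ {x | f x ≤ t}) ≤ ∫⁻ x in S, ENNReal.ofReal (f x) ∂μ := by
  rw [lintegral_eq_lintegral_meas_lt (μ.restrict S) (ae_of_all _ hf0) hf.aemeasurable]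
  refine lintegral_mono fun t => ?_
  rw [Measure.restrict_apply (measurableSet_lt measurable_const hf), tsub_le_iff_right]
  calc μ S ≤ μ ({x | t < f x} ∩ S ∪ {x | f x ≤ t}) :=
        measure_mono fun x hx => (lt_or_ge t (f x)).imp (fun h => ⟨h, hx⟩) id
    _ ≤ _ := measure_union_le _ _

theorem integral_sub_mul_rpow_eq {p V ω R : ℝ} (hp : -1 < p) (hR : 0 ≤ R)
    (hRV : ω * R ^ p = V) : ∫ t in 0..R, (V - ω * t ^ p) = p / (p + 1) * V * R := by
  have hp1 : p + 1 ≠ 0 := by linarith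
  rw [intervalIntegral.integral_sub intervalIntegrable_const
      ((intervalIntegral.intervalIntegrable_rpow' (by linarith)).const_mul ω),
    intervalIntegral.integral_const, intervalIntegral.integral_const_mul,
    integral_rpow (Or.inl (by linarith)), zero_rpow hp1, rpow_add_one' hR hp1, ← hRV]
  field_simp
  ring

-- The left-hand side is `∫ ‖x‖²` over a ball of the same volume `V` as `S`; its squared radius
-- is the `R` below.
theorem le_setIntegral_sum_sq {n : ℕ} (hn : 0 < n) {S : Set (Fin n → ℝ)} (hS : volume S ≠ ⊤)
    (hint : IntegrableOn (fun x => ∑ i, x i ^ 2) S) :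
    n / (n + 2) * (volume S).toReal *
        ((volume S).toReal / (√π ^ n / Gamma (n / 2 + 1))) ^ ((2 : ℝ) / n)
      ≤ ∫ x in S, ∑ i, x i ^ 2 := by
  set ω := √π ^ n / Gamma (n / 2 + 1)
  set V := (volume S).toReal
  set R := (V / ω) ^ ((2 : ℝ) / n)
  have hω : 0 < ω := div_pos (by positivity) (Gamma_pos_of_pos (by positivity))
  have hR : 0 ≤ R := by positivity
  have hRV : ω * R ^ ((n : ℝ) / 2) = V := by
    rw [← rpow_mul (by positivity), show (2 : ℝ) / n * (n / 2) = 1 by field_simp, rpow_one,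
      mul_div_cancel₀ _ hω.ne']
  have hq : Measurable fun x : Fin n → ℝ => ∑ i, x i ^ 2 := by fun_prop
  have hpow : Continuous fun t : ℝ => V - ω * t ^ ((n : ℝ) / 2) := by
    have := continuous_rpow_const (q := (n : ℝ) / 2) (by positivity)
    fun_prop
  have hlower : ENNReal.ofReal (n / (n + 2) * V * R) ≤
      ∫⁻ x in S, ENNReal.ofReal (∑ i, x i ^ 2) :=
    calc ENNReal.ofReal (n / (n + 2) * V * R)
        = ENNReal.ofReal (∫ t in Ioc 0 R, (V - ω * t ^ ((n : ℝ) / 2))) := by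
          rw [← intervalIntegral.integral_of_le hR,
            integral_sub_mul_rpow_eq (neg_one_lt_zero.trans_le (by positivity)) hR hRV]
          congr 2
          field_simp
      _ = ∫⁻ t in Ioc 0 R, ENNReal.ofReal (V - ω * t ^ ((n : ℝ) / 2)) := by
          refine ofReal_integral_eq_lintegral_ofReal hpow.integrableOn_Ioc
            ((ae_restrict_iff' measurableSet_Ioc).mpr (ae_of_all _ fun t ht => ?_))
          rw [Pi.zero_apply, sub_nonneg, ← hRV]
          gcongr
          exacts [ht.1.le, ht.2]
      _ = ∫⁻ t in Ioc 0 R, (volume S - volume {x : Fin n → ℝ | ∑ i, x i ^ 2 ≤ t}) := by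
          refine setLIntegral_congr_fun measurableSet_Ioc fun t ht => ?_
          rw [ENNReal.ofReal_sub _ (mul_nonneg hω.le (rpow_nonneg ht.1.le _)),
            ENNReal.ofReal_toReal hS, volume_setOf_sum_sq_le hn ht.1.le, mul_comm]
      _ ≤ ∫⁻ t in Ioi 0, (volume S - volume {x : Fin n → ℝ | ∑ i, x i ^ 2 ≤ t}) :=
          lintegral_mono_set Ioc_subset_Ioi_self
      _ ≤ ∫⁻ x in S, ENNReal.ofReal (∑ i, x i ^ 2) :=
          lintegral_measure_sub_sublevel_le_setLIntegral volume hq (fun x => by positivity) S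
  have hq0 : 0 ≤ᵐ[volume.restrict S] fun x : Fin n → ℝ => ∑ i, x i ^ 2 :=
    ae_of_all _ fun x => by positivity
  rwa [← ofReal_integral_eq_lintegral_ofReal hint hq0,
    ENNReal.ofReal_le_ofReal_iff (integral_nonneg_of_ae hq0)] at hlower

theorem span_map_linearEquiv_eq_top {V : Type*} [AddCommGroup V] [Module ℝ V]
    {Λ : AddSubgroup V} (hspan : Submodule.span ℝ (Λ : Set V) = ⊤) (e : V ≃ₗ[ℝ] V) :
    Submodule.span ℝ (Λ.map (e : V →ₗ[ℝ] V).toAddMonoidHom : Set V) = ⊤ := by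
  rw [AddSubgroup.coe_map, LinearMap.toAddMonoidHom_coe, Submodule.span_image, hspan,
    Submodule.map_top, LinearMap.range_eq_top]
  exact e.surjective

section Voronoi

variable {n : ℕ} {Λ : AddSubgroup (Fin n → ℝ)}

theorem isClosed_voronoiRegion : IsClosed (voronoiRegion n Λ) := by
  simp only [voronoiRegion, ofPred_forall]
  exact isClosed_biInter fun l _ => isClosed_le (by fun_prop) (by fun_prop)

theorem mem_vadd_voronoiRegion_iff {g : Λ} {x : Fin n → ℝ} :
    x ∈ g +ᵥ voronoiRegion n Λ ↔
      ∀ l ∈ Λ, ∑ i, (x i - (g : Fin n → ℝ) i) ^ 2 ≤ ∑ i, (x i - l i) ^ 2 := by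
  rw [mem_vadd_set_iff_neg_vadd_mem]
  have hx : ∀ i, (-g +ᵥ x) i = x i - (g : Fin n → ℝ) i := fun i => by
    rw [AddSubgroup.vadd_def, vadd_eq_add, NegMemClass.coe_neg, neg_add_eq_sub]; rfl
  simp only [voronoiRegion, mem_ofPred_eq, hx]
  refine ⟨fun h l hl => ?_, fun h l hl => ?_⟩
  · simpa using h (l - g) (sub_mem hl g.2)
  · simpa [sub_sub] using h (g + l) (add_mem g.2 hl)

theorem isAddFundamentalDomain_voronoiRegion (hΛ : IsClosed (Λ : Set (Fin n → ℝ))) :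
    IsAddFundamentalDomain Λ (voronoiRegion n Λ) volume where
  nullMeasurableSet := isClosed_voronoiRegion.measurableSet.nullMeasurableSet
  ae_covers := ae_of_all _ fun x => by
    obtain ⟨g, hg, hmin⟩ := exists_forall_sum_sq_sub_le_of_isClosed hΛ ⟨0, Λ.zero_mem⟩ x
    exact ⟨-⟨g, hg⟩, mem_vadd_set_iff_neg_vadd_mem.mp (mem_vadd_voronoiRegion_iff.mpr hmin)⟩
  aedisjoint g g' hgg' :=
    measure_mono_null (fun x hx => le_antisymm (mem_vadd_voronoiRegion_iff.mp hx.1 g' g'.2)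
      (mem_vadd_voronoiRegion_iff.mp hx.2 g g.2))
      (volume_setOf_sum_sq_sub_eq_eq_zero (Subtype.coe_injective.ne hgg'))

theorem volume_voronoiRegion_map (hΛ : IsClosed (Λ : Set (Fin n → ℝ))) [Countable Λ]
    (e : (Fin n → ℝ) ≃ₗ[ℝ] (Fin n → ℝ)) :
    volume (voronoiRegion n (Λ.map (e : (Fin n → ℝ) →ₗ[ℝ] (Fin n → ℝ)).toAddMonoidHom)) =
      ENNReal.ofReal |LinearMap.det (e : (Fin n → ℝ) →ₗ[ℝ] (Fin n → ℝ))| *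
        volume (voronoiRegion n Λ) := by
  set Λ' := Λ.map (e : (Fin n → ℝ) →ₗ[ℝ] (Fin n → ℝ)).toAddMonoidHom
  have hΛ' : IsClosed (Λ' : Set (Fin n → ℝ)) :=
    e.toContinuousLinearEquiv.toHomeomorph.isClosedMap _ hΛ
  have : Countable Λ' := ((countable_coe_iff.mp ‹_›).image e).to_subtype
  let φ := Λ.equivMapOfInjective (e : (Fin n → ℝ) →ₗ[ℝ] (Fin n → ℝ)).toAddMonoidHom e.injective
  have hφ : ∀ g, ((φ.symm g : Λ) : Fin n → ℝ) = e.symm g := fun g => by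
    rw [← e.symm_apply_apply (φ.symm g : Fin n → ℝ)]
    exact congrArg (fun y : Λ' => e.symm y) (φ.apply_symm_apply g)
  have himage : IsAddFundamentalDomain Λ' (e '' voronoiRegion n Λ) volume :=
    (isAddFundamentalDomain_voronoiRegion hΛ).image_of_equiv e.toEquiv
      (Measure.LinearMap.quasiMeasurePreserving volume _ e.symm.isUnit_det'.ne_zero)
      φ.symm.toEquiv fun g x => by
        change e (φ.symm g + x) = g + e x
        rw [map_add, hφ, e.apply_symm_apply]
  rw [(isAddFundamentalDomain_voronoiRegion hΛ').measure_eq himage]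
  exact Measure.addHaar_image_linearMap volume _ _

-- Every point has a lattice translate in a bounded parallelepiped, and no translate of a point of
-- the Voronoi region is shorter than the point itself.
theorem exists_forall_mem_voronoiRegion_sum_sq_le
    (hspan : Submodule.span ℝ (Λ : Set (Fin n → ℝ)) = ⊤) :
    ∃ C, ∀ x ∈ voronoiRegion n Λ, ∑ i, x i ^ 2 ≤ C := by
  let b := Module.Basis.ofSpan hspan.ge
  have : Finite _ := Module.Finite.finite_basis b
  obtain ⟨C, hC⟩ :=
    (ZSpan.fundamentalDomain_isBounded b).isCompact_closure.exists_bound_of_continuousOn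
      (f := fun x : Fin n → ℝ => ∑ i, x i ^ 2) (by fun_prop)
  refine ⟨C, fun x hx => ?_⟩
  obtain ⟨v, hv, -⟩ := ZSpan.exist_unique_vadd_mem_fundamentalDomain b x
  have hvΛ : (v : Fin n → ℝ) ∈ Λ := by
    refine (Submodule.span_le (p := Λ.toIntSubmodule)).mpr ?_ v.2
    exact Module.Basis.ofSpan_subset hspan.ge
  calc ∑ i, x i ^ 2 ≤ ∑ i, (x i - (-(v : Fin n → ℝ)) i) ^ 2 := hx _ (neg_mem hvΛ)
    _ = ∑ i, (v +ᵥ x) i ^ 2 := by simp [Submodule.vadd_def, add_comm]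
    _ ≤ C := (le_abs_self _).trans (hC _ (subset_closure hv))

end Voronoi

theorem latticeSecondMoment_ge {n : ℕ} (hn : 0 < n) {Λ : AddSubgroup (Fin n → ℝ)}
    (hspan : Submodule.span ℝ (Λ : Set (Fin n → ℝ)) = ⊤) :
    latticeSecondMoment n Λ ≥ Gamma ((n : ℝ) / 2 + 1) ^ ((2 : ℝ) / n) / ((n + 2) * π) *
      (volume (voronoiRegion n Λ)).toReal ^ ((2 : ℝ) / n) := by
  obtain ⟨C, hC⟩ := exists_forall_mem_voronoiRegion_sum_sq_le hspan
  have hC0 : 0 ≤ C := by simpa using hC 0 fun l _ => by simp; positivity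
  have hfin : volume (voronoiRegion n Λ) ≠ ⊤ := by
    refine ne_top_of_le_ne_top ?_ (measure_mono (show _ ⊆ {x | ∑ i, x i ^ 2 ≤ C} from hC))
    rw [volume_setOf_sum_sq_le hn hC0]
    exact ENNReal.ofReal_ne_top
  have hint : IntegrableOn (fun x : Fin n → ℝ => ∑ i, x i ^ 2) (voronoiRegion n Λ) :=
    Measure.integrableOn_of_bounded hfin
      (by fun_prop : Continuous fun x : Fin n → ℝ => ∑ i, x i ^ 2).aestronglyMeasurable
      (M := C) <|
      (ae_restrict_iff' isClosed_voronoiRegion.measurableSet).mpr <| ae_of_all _ fun x hx => by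
        rw [norm_of_nonneg (by positivity)]
        exact hC x hx
  have hmoment := le_setIntegral_sum_sq hn hfin hint
  unfold latticeSecondMoment
  have hV0 : 0 ≤ (volume (voronoiRegion n Λ)).toReal := ENNReal.toReal_nonneg
  generalize (volume (voronoiRegion n Λ)).toReal = V at hV0 hmoment ⊢
  have hΓ : 0 < Gamma ((n : ℝ) / 2 + 1) := Gamma_pos_of_pos (by positivity)
  have hπ : (√π ^ n) ^ ((2 : ℝ) / n) = π := by
    rw [← rpow_natCast, ← rpow_mul (sqrt_nonneg π), mul_div_cancel₀ _ (by positivity), rpow_two,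
      sq_sqrt pi_pos.le]
  rcases hV0.eq_or_lt with hV | hV
  · rw [← hV, zero_rpow (by positivity)]
    simp
  · rw [div_rpow hV.le (by positivity), div_rpow (by positivity) hΓ.le, hπ] at hmoment
    calc _ = 1 / (n * V) * (n / (n + 2) * V *
          (V ^ ((2 : ℝ) / n) / (π / Gamma ((n : ℝ) / 2 + 1) ^ ((2 : ℝ) / n)))) := by
          field_simp
      _ ≤ _ := by gcongr

/-- **Zador's lower bound.**  For a full-rank lattice `Λ ⊂ ℝⁿ` with
Voronoi-region volume (covolume) `V`, `σ²(Λ) ≥ Γ(n/2+1)^(2/n)/((n+2)π) · V^(2/n)`.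
In particular, for a full-rank lattice `L` with point density `γ(L) = covol(L)⁻¹` and an
invertible `U`, `σ²(UL) ≥ Γ(n/2+1)^(2/n)/((n+2)π) · γ(L)^(−2/n) · |det U|^(2/n)`. -/
theorem stmt_5 (n : ℕ) (hn : 0 < n)
    (Λ : AddSubgroup (Fin n → ℝ)) (hdisc : DiscreteTopology Λ)
    (hspan : Submodule.span ℝ (Λ : Set (Fin n → ℝ)) = ⊤)
    (U : Matrix (Fin n) (Fin n) ℝ) (hU : IsUnit U.det) :
    latticeSecondMoment n Λ ≥
      Real.Gamma ((n : ℝ) / 2 + 1) ^ ((2 : ℝ) / n) / (((n : ℝ) + 2) * Real.pi) *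
        ((volume (voronoiRegion n Λ)).toReal) ^ ((2 : ℝ) / n)
    ∧ latticeSecondMoment n (Λ.map U.mulVecLin.toAddMonoidHom) ≥
      Real.Gamma ((n : ℝ) / 2 + 1) ^ ((2 : ℝ) / n) / (((n : ℝ) + 2) * Real.pi) *
        (((volume (voronoiRegion n Λ)).toReal)⁻¹) ^ (-(2 : ℝ) / n) *
        |U.det| ^ ((2 : ℝ) / n) := by
  refine ⟨latticeSecondMoment_ge hn hspan, ?_⟩
  let e := U.toLinearEquiv' (U.invertibleOfIsUnitDet hU)
  have hΛ : IsClosed (Λ : Set (Fin n → ℝ)) := AddSubgroup.isClosed_of_discrete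
  have : Countable Λ := TopologicalSpace.separableSpace_iff_countable.mp inferInstance
  have hdet : LinearMap.det (e : (Fin n → ℝ) →ₗ[ℝ] (Fin n → ℝ)) = U.det := LinearMap.det_toLin' U
  have hmoment := latticeSecondMoment_ge hn (span_map_linearEquiv_eq_top hspan e)
  rw [volume_voronoiRegion_map hΛ e, ENNReal.toReal_mul, ENNReal.toReal_ofReal (abs_nonneg _),
    hdet] at hmoment
  have hV0 : 0 ≤ (volume (voronoiRegion n Λ)).toReal := ENNReal.toReal_nonneg
  rw [neg_div, rpow_neg (inv_nonneg.mpr hV0), inv_rpow hV0, inv_inv, mul_assoc, mul_comm (_ ^ _),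
    ← mul_rpow (abs_nonneg _) hV0]
  exact hmoment
end

section
/- For nonzero x, y ∈ ℝⁿ define Δ_FP(x,y) = n·∑_{i=1}^n (x_i²/‖x‖²)·(y_i²/‖y‖²). Let S be a Haar-random orthogonal matrix in O(n). Then 𝔼[Δ_FP(Sx, Sy)] ≤ 3n/(n+2) < 3. -/
open MeasureTheory ProbabilityTheory Matrix

noncomputable def deltaFP {n : ℕ} (x y : Fin n → ℝ) : ℝ :=
  (n : ℝ) * ∑ i, (x i ^ 2 / ∑ j, x j ^ 2) * (y i ^ 2 / ∑ j, y j ^ 2)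

/-!
With `pᵢ = (Sx)ᵢ²/‖x‖²` and `qᵢ = (Sy)ᵢ²/‖y‖²`, AM–GM gives
`Δ_FP(Sx, Sy) ≤ (n/2) (∑ pᵢ² + ∑ qᵢ²)`, so it suffices to know the fourth moments of a
rotation-invariant random vector `u` on the sphere `∑ uᵢ² = r`. Invariance under the rotation by
`π/4` in the `(i, j)`-plane gives `𝔼[uᵢ⁴] + 𝔼[uⱼ⁴] = 6 𝔼[uᵢ²uⱼ²]` for `i ≠ j`, and expanding
`r² = 𝔼[(∑ uᵢ²)²]` then yields `𝔼[∑ uᵢ⁴] = 3r²/(n+2)`.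
-/

namespace Matrix

variable {ι : Type*} [Fintype ι] [DecidableEq ι]

theorem mem_orthogonalGroup_of_forall_sum_sq_mulVec {A : Matrix ι ι ℝ}
    (hA : ∀ u, ∑ k, (A *ᵥ u) k ^ 2 = ∑ k, u k ^ 2) : A ∈ orthogonalGroup ι ℝ := by
  have hdot : ∀ u w, A *ᵥ u ⬝ᵥ A *ᵥ w = u ⬝ᵥ w := by
    intro u w
    have key := hA (u + w)
    simp only [mulVec_add, Pi.add_apply, add_sq, Finset.sum_add_distrib, hA u, hA w] at key
    simp only [mul_assoc, ← Finset.mul_sum] at key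
    simp only [dotProduct]
    linarith
  rw [mem_orthogonalGroup_iff']
  ext k l
  have := hdot (Pi.single k 1) (Pi.single l 1)
  simpa [mulVec_single_one, dotProduct, mul_apply, one_apply, Pi.single_apply, eq_comm] using this

theorem sum_sq_mulVec_of_mem_orthogonalGroup {A : Matrix ι ι ℝ} (hA : A ∈ orthogonalGroup ι ℝ)
    (u : ι → ℝ) : ∑ k, (A *ᵥ u) k ^ 2 = ∑ k, u k ^ 2 := by
  have h : Aᵀ * A = 1 := by simpa using (mem_orthogonalGroup_iff' _ _).mp hA
  have : A *ᵥ u ⬝ᵥ A *ᵥ u = u ⬝ᵥ u := by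
    rw [dotProduct_mulVec, ← vecMul_transpose, vecMul_vecMul, h, vecMul_one]
  simpa [dotProduct, sq] using this

def planeRotation (i j : ι) (c s : ℝ) : Matrix ι ι ℝ :=
  of fun k => if k = i then c • Pi.single i 1 - s • Pi.single j 1
    else if k = j then s • Pi.single i 1 + c • Pi.single j 1 else Pi.single k 1

variable {i j : ι} {c s : ℝ}

theorem planeRotation_mulVec_left (u : ι → ℝ) :
    (planeRotation i j c s *ᵥ u) i = c * u i - s * u j := by
  simp only [planeRotation, mulVec, of_apply, if_true]
  simp [dotProduct, sub_mul, Finset.sum_sub_distrib, Pi.single_apply]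

theorem planeRotation_mulVec_right (hij : i ≠ j) (u : ι → ℝ) :
    (planeRotation i j c s *ᵥ u) j = s * u i + c * u j := by
  simp only [planeRotation, mulVec, of_apply, hij.symm, if_true, if_false]
  simp [dotProduct, add_mul, Finset.sum_add_distrib, Pi.single_apply]

theorem planeRotation_mulVec_of_ne {k : ι} (hi : k ≠ i) (hj : k ≠ j) (u : ι → ℝ) :
    (planeRotation i j c s *ᵥ u) k = u k := by
  simp [planeRotation, mulVec, hi, hj]

theorem planeRotation_mem_orthogonalGroup (hij : i ≠ j) (hcs : c ^ 2 + s ^ 2 = 1) :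
    planeRotation i j c s ∈ orthogonalGroup ι ℝ := by
  refine mem_orthogonalGroup_of_forall_sum_sq_mulVec fun u => ?_
  rw [← sub_eq_zero, ← Finset.sum_sub_distrib,
    Fintype.sum_eq_add i j hij fun k hk => by rw [planeRotation_mulVec_of_ne hk.1 hk.2, sub_self],
    planeRotation_mulVec_left, planeRotation_mulVec_right hij]
  linear_combination (u i ^ 2 + u j ^ 2) * hcs

end Matrix

open Matrix

theorem sum_sum_eq_of_six_mul_eq {ι : Type*} [Fintype ι] {A : ι → ℝ} {B : ι → ι → ℝ}
    (hdiag : ∀ i, B i i = A i) (hoff : ∀ i j, i ≠ j → 6 * B i j = A i + A j) :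
    ∑ i, ∑ j, B i j = (Fintype.card ι + 2) / 3 * ∑ i, A i := by
  classical
  have hB : ∀ i j, B i j = (A i + A j) / 6 + if i = j then 2 * A i / 3 else 0 := by
    intro i j
    split_ifs with h
    · subst h; rw [hdiag]; ring
    · linarith [hoff i j h]
  simp only [hB, Finset.sum_add_distrib, Finset.sum_ite_eq, Finset.mem_univ, if_true,
    ← Finset.sum_div, Finset.sum_const, Finset.card_univ, nsmul_eq_mul, ← Finset.mul_sum]
  ring

noncomputable def inverseParticipationRatio {ι : Type*} [Fintype ι] (u : ι → ℝ) : ℝ :=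
  ∑ i, (u i ^ 2 / ∑ j, u j ^ 2) ^ 2

theorem inverseParticipationRatio_eq {ι : Type*} [Fintype ι] (u : ι → ℝ) :
    inverseParticipationRatio u = (∑ i, u i ^ 4) / (∑ j, u j ^ 2) ^ 2 := by
  simp only [inverseParticipationRatio, div_pow, ← pow_mul, Finset.sum_div]

theorem measurable_inverseParticipationRatio {ι : Type*} [Fintype ι] :
    Measurable (inverseParticipationRatio : (ι → ℝ) → ℝ) := by
  unfold inverseParticipationRatio; fun_prop

theorem deltaFP_nonneg {n : ℕ} (u v : Fin n → ℝ) : 0 ≤ deltaFP u v := by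
  unfold deltaFP; positivity

theorem deltaFP_le {n : ℕ} (u v : Fin n → ℝ) :
    deltaFP u v ≤ n / 2 * (inverseParticipationRatio u + inverseParticipationRatio v) := by
  rw [deltaFP, inverseParticipationRatio, inverseParticipationRatio, ← Finset.sum_add_distrib,
    div_mul_eq_mul_div, mul_div_assoc, Finset.sum_div]
  gcongr with i
  linarith [two_mul_le_add_sq (u i ^ 2 / ∑ j, u j ^ 2) (v i ^ 2 / ∑ j, v j ^ 2)]

section SphereInvariant

variable {ι : Type*} [Fintype ι] {ν : Measure (ι → ℝ)} [IsProbabilityMeasure ν] {r : ℝ}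

theorem integrable_sq_mul_sq (hr : ∀ᵐ u ∂ν, ∑ k, u k ^ 2 = r) (i j : ι) :
    Integrable (fun u : ι → ℝ => u i ^ 2 * u j ^ 2) ν := by
  refine (integrable_const (r * r)).mono' (by fun_prop) ?_
  filter_upwards [hr] with u hu
  have hle : ∀ k, u k ^ 2 ≤ r := fun k =>
    hu ▸ Finset.single_le_sum (fun l _ => sq_nonneg (u l)) (Finset.mem_univ k)
  rw [Real.norm_eq_abs, abs_of_nonneg (by positivity)]
  exact mul_le_mul (hle i) (hle j) (sq_nonneg _) ((sq_nonneg _).trans (hle i))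

theorem integrable_pow_four (hr : ∀ᵐ u ∂ν, ∑ k, u k ^ 2 = r) (i : ι) :
    Integrable (fun u : ι → ℝ => u i ^ 4) ν := by
  simpa only [← pow_add] using integrable_sq_mul_sq hr i i

theorem integrable_inverseParticipationRatio (hr : ∀ᵐ u ∂ν, ∑ k, u k ^ 2 = r) :
    Integrable inverseParticipationRatio ν := by
  refine ((integrable_finsetSum Finset.univ fun i _ => integrable_pow_four hr i).div_const
    (r ^ 2)).congr ?_
  filter_upwards [hr] with u hu
  rw [inverseParticipationRatio_eq, hu]

variable [DecidableEq ι]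

theorem integral_pow_four_add_pow_four (hr : ∀ᵐ u ∂ν, ∑ k, u k ^ 2 = r)
    (hinv : ∀ Q ∈ orthogonalGroup ι ℝ, ν.map (Q *ᵥ ·) = ν) {i j : ι} (hij : i ≠ j) :
    ∫ u, u i ^ 4 ∂ν + ∫ u, u j ^ 4 ∂ν = 6 * ∫ u, u i ^ 2 * u j ^ 2 ∂ν := by
  set c := (√2)⁻¹
  have hc : c ^ 2 = 1 / 2 := by rw [inv_pow, Real.sq_sqrt zero_le_two, one_div]
  set Q := planeRotation i j c c
  have hQ := hinv Q (planeRotation_mem_orthogonalGroup hij (by rw [hc]; norm_num))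
  have hrot : ∀ u : ι → ℝ, (Q *ᵥ u) i ^ 4 + (Q *ᵥ u) j ^ 4
      = (u i ^ 4 + u j ^ 4) / 2 + 3 * (u i ^ 2 * u j ^ 2) := by
    intro u
    rw [planeRotation_mulVec_left, planeRotation_mulVec_right hij]
    linear_combination
      (2 * u i ^ 4 + 12 * u i ^ 2 * u j ^ 2 + 2 * u j ^ 4) * (c ^ 2 + 1 / 2) * hc
  have hmap : ∫ u, (Q *ᵥ u) i ^ 4 + (Q *ᵥ u) j ^ 4 ∂ν = ∫ u, u i ^ 4 + u j ^ 4 ∂ν := by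
    conv_rhs => rw [← hQ]
    exact (integral_map (by fun_prop : Continuous (Q *ᵥ ·)).aemeasurable
      (by fun_prop : Continuous fun u : ι → ℝ => u i ^ 4 + u j ^ 4).aestronglyMeasurable).symm
  have h4 : Integrable (fun u : ι → ℝ => u i ^ 4 + u j ^ 4) ν :=
    (integrable_pow_four hr i).add (integrable_pow_four hr j)
  simp only [hrot] at hmap
  rw [integral_add (h4.div_const 2) ((integrable_sq_mul_sq hr i j).const_mul 3), integral_div,
    integral_const_mul, integral_add (integrable_pow_four hr i) (integrable_pow_four hr j)] at hmap
  linarith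

theorem integral_sum_pow_four (hr : ∀ᵐ u ∂ν, ∑ k, u k ^ 2 = r)
    (hinv : ∀ Q ∈ orthogonalGroup ι ℝ, ν.map (Q *ᵥ ·) = ν) :
    ∫ u, ∑ i, u i ^ 4 ∂ν = 3 * r ^ 2 / (Fintype.card ι + 2) := by
  have hsq : ∫ u, (∑ k, u k ^ 2) ^ 2 ∂ν = r ^ 2 := by
    rw [integral_congr_ae (hr.mono fun u hu => by rw [hu]), integral_const, probReal_univ,
      one_smul]
  have hexpand : ∫ u, (∑ k, u k ^ 2) ^ 2 ∂ν = ∑ i, ∑ j, ∫ u, u i ^ 2 * u j ^ 2 ∂ν := by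
    simp only [sq (∑ k, _), Finset.sum_mul_sum]
    rw [integral_finsetSum _ fun i _ => integrable_finsetSum _ fun j _ =>
      integrable_sq_mul_sq hr i j]
    simp only [integral_finsetSum _ fun j _ => integrable_sq_mul_sq hr _ j]
  have hmoments := sum_sum_eq_of_six_mul_eq (A := fun i => ∫ u, u i ^ 4 ∂ν)
    (fun i => by simp only [← pow_add])
    (fun i j hij => (integral_pow_four_add_pow_four hr hinv hij).symm)
  rw [integral_finsetSum _ fun i _ => integrable_pow_four hr i, eq_div_iff (by positivity)]
  linarith

theorem integral_inverseParticipationRatio_le (hr : ∀ᵐ u ∂ν, ∑ k, u k ^ 2 = r)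
    (hinv : ∀ Q ∈ orthogonalGroup ι ℝ, ν.map (Q *ᵥ ·) = ν) :
    ∫ u, inverseParticipationRatio u ∂ν ≤ 3 / (Fintype.card ι + 2) := by
  have hae : inverseParticipationRatio =ᵐ[ν] fun u => (∑ i, u i ^ 4) / r ^ 2 :=
    hr.mono fun u hu => by rw [inverseParticipationRatio_eq, hu]
  rw [integral_congr_ae hae, integral_div, integral_sum_pow_four hr hinv]
  calc 3 * r ^ 2 / ((Fintype.card ι : ℝ) + 2) / r ^ 2
      = 3 / ((Fintype.card ι : ℝ) + 2) * (r ^ 2 / r ^ 2) := by ring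
    _ ≤ 3 / ((Fintype.card ι : ℝ) + 2) :=
      mul_le_of_le_one_right (by positivity) (div_self_le_one _)

end SphereInvariant

section RandomOrthogonal

variable {ι : Type*} [Fintype ι] {μ : Measure (ι → ι → ℝ)}

theorem measurable_of_mulVec (x : ι → ℝ) :
    Measurable fun S : ι → ι → ℝ => of S *ᵥ x :=
  (by fun_prop : Continuous fun S : ι → ι → ℝ => of S *ᵥ x).measurable

variable [DecidableEq ι]

theorem ae_sum_sq_map_of_mulVec (hsupp : ∀ᵐ S ∂μ, of S ∈ orthogonalGroup ι ℝ) (x : ι → ℝ) :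
    ∀ᵐ u ∂μ.map (fun S => of S *ᵥ x), ∑ k, u k ^ 2 = ∑ k, x k ^ 2 := by
  rw [ae_map_iff (measurable_of_mulVec x).aemeasurable
    (measurableSet_eq_fun (by fun_prop) measurable_const)]
  exact hsupp.mono fun S hS => sum_sq_mulVec_of_mem_orthogonalGroup hS x

theorem map_mulVec_map_of_mulVec
    (hinv : ∀ Q ∈ orthogonalGroup ι ℝ, μ.map (fun S => of.symm (Q * of S)) = μ) (x : ι → ℝ) :
    ∀ Q ∈ orthogonalGroup ι ℝ,
      (μ.map (fun S => of S *ᵥ x)).map (Q *ᵥ ·) = μ.map (fun S => of S *ᵥ x) := by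
  intro Q hQ
  have hmul : Continuous fun S : ι → ι → ℝ => of.symm (Q * of S) :=
    continuous_const.matrix_mul continuous_id
  rw [Measure.map_map (by fun_prop) (measurable_of_mulVec x)]
  conv_rhs => rw [← hinv Q hQ, Measure.map_map (measurable_of_mulVec x) hmul.measurable]
  congr 1
  ext S
  simp [mulVec_mulVec]

variable [IsProbabilityMeasure μ]

theorem integrable_inverseParticipationRatio_of_mulVec
    (hsupp : ∀ᵐ S ∂μ, of S ∈ orthogonalGroup ι ℝ) (x : ι → ℝ) :
    Integrable (fun S => inverseParticipationRatio (of S *ᵥ x)) μ := by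
  have := Measure.isProbabilityMeasure_map (μ := μ) (measurable_of_mulVec x).aemeasurable
  exact (integrable_map_measure measurable_inverseParticipationRatio.aestronglyMeasurable
    (measurable_of_mulVec x).aemeasurable).1
    (integrable_inverseParticipationRatio (ae_sum_sq_map_of_mulVec hsupp x))

theorem integral_inverseParticipationRatio_of_mulVec_le
    (hsupp : ∀ᵐ S ∂μ, of S ∈ orthogonalGroup ι ℝ)
    (hinv : ∀ Q ∈ orthogonalGroup ι ℝ, μ.map (fun S => of.symm (Q * of S)) = μ) (x : ι → ℝ) :
    ∫ S, inverseParticipationRatio (of S *ᵥ x) ∂μ ≤ 3 / (Fintype.card ι + 2) := by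
  have := Measure.isProbabilityMeasure_map (μ := μ) (measurable_of_mulVec x).aemeasurable
  rw [← integral_map (measurable_of_mulVec x).aemeasurable
    measurable_inverseParticipationRatio.aestronglyMeasurable]
  exact integral_inverseParticipationRatio_le (ae_sum_sq_map_of_mulVec hsupp x)
    (map_mulVec_map_of_mulVec hinv x)

end RandomOrthogonal

theorem stmt_11_general (n : ℕ) (x y : Fin n → ℝ)
    (μ : Measure (Fin n → Fin n → ℝ)) [IsProbabilityMeasure μ]
    (hsupp : ∀ᵐ S ∂μ, Matrix.of S ∈ Matrix.orthogonalGroup (Fin n) ℝ)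
    (hinv : ∀ Q : Matrix (Fin n) (Fin n) ℝ, Q ∈ Matrix.orthogonalGroup (Fin n) ℝ →
      Measure.map (fun S : Fin n → Fin n → ℝ => Matrix.of.symm (Q * Matrix.of S)) μ = μ) :
    (∫ S : Fin n → Fin n → ℝ,
        deltaFP ((Matrix.of S).mulVec x) ((Matrix.of S).mulVec y) ∂μ)
      ≤ 3 * (n : ℝ) / ((n : ℝ) + 2)
    ∧ 3 * (n : ℝ) / ((n : ℝ) + 2) < 3 := by
  have hx := integral_inverseParticipationRatio_of_mulVec_le hsupp hinv x
  have hy := integral_inverseParticipationRatio_of_mulVec_le hsupp hinv y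
  rw [Fintype.card_fin] at hx hy
  refine ⟨?_, by rw [div_lt_iff₀ (by positivity)]; linarith⟩
  calc ∫ S, deltaFP (of S *ᵥ x) (of S *ᵥ y) ∂μ
      ≤ ∫ S, n / 2 * (inverseParticipationRatio (of S *ᵥ x)
          + inverseParticipationRatio (of S *ᵥ y)) ∂μ :=
        integral_mono_of_nonneg (ae_of_all _ fun S => deltaFP_nonneg _ _)
          (((integrable_inverseParticipationRatio_of_mulVec hsupp x).add
            (integrable_inverseParticipationRatio_of_mulVec hsupp y)).const_mul _)
          (ae_of_all _ fun S => deltaFP_le _ _)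
    _ = n / 2 * (∫ S, inverseParticipationRatio (of S *ᵥ x) ∂μ
          + ∫ S, inverseParticipationRatio (of S *ᵥ y) ∂μ) := by
        rw [integral_const_mul,
          integral_add (integrable_inverseParticipationRatio_of_mulVec hsupp x)
            (integrable_inverseParticipationRatio_of_mulVec hsupp y)]
    _ ≤ n / 2 * (3 / (n + 2) + 3 / (n + 2)) := by gcongr
    _ = 3 * n / (n + 2) := by ring

/-- For nonzero `x, y ∈ ℝⁿ` and a Haar-random orthogonal `S ∈ O(n)`
(law: a probability measure on matrices concentrated on the orthogonal group and
invariant under left multiplication by any orthogonal matrix),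
`𝔼[Δ_FP(Sx, Sy)] ≤ 3n/(n+2) < 3`. -/
theorem stmt_11 (n : ℕ) (hn : 0 < n) (x y : Fin n → ℝ) (hx : x ≠ 0) (hy : y ≠ 0)
    (μ : Measure (Fin n → Fin n → ℝ)) [IsProbabilityMeasure μ]
    (hsupp : ∀ᵐ S ∂μ, Matrix.of S ∈ Matrix.orthogonalGroup (Fin n) ℝ)
    (hinv : ∀ Q : Matrix (Fin n) (Fin n) ℝ, Q ∈ Matrix.orthogonalGroup (Fin n) ℝ →
      Measure.map (fun S : Fin n → Fin n → ℝ => Matrix.of.symm (Q * Matrix.of S)) μ = μ) :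
    (∫ S : Fin n → Fin n → ℝ,
        deltaFP ((Matrix.of S).mulVec x) ((Matrix.of S).mulVec y) ∂μ)
      ≤ 3 * (n : ℝ) / ((n : ℝ) + 2)
    ∧ 3 * (n : ℝ) / ((n : ℝ) + 2) < 3 :=
  stmt_11_general n x y μ hsupp hinv
end

section
/- Fix x, y ∈ ℝⁿ and γ_x, γ_y > 0. Let e_x, e_y be random vectors in ℝⁿ whose 2n coordinates are i.i.d. uniform on [−1/2, 1/2). Then 𝔼[(γ_x e_xᵀy + γ_y e_yᵀx + γ_x γ_y e_xᵀe_y)²] = (γ_x²/12)‖y‖² + (γ_y²/12)‖x‖² + n γ_x² γ_y² /144. Consequently, the distortion of INT-M absmax quantization with scales γ_x = 2^{−(M−1)}‖x‖_∞, γ_y = 2^{−(M−1)}‖y‖_∞ under the uniform-independent-noise model equals (‖x‖²‖y‖²/n)·(2^{−2M}/3)·[‖x‖_∞²/(‖x‖²/n) + ‖y‖_∞²/(‖y‖²/n) + (2^{−2M}/3)·(‖x‖_∞²/(‖x‖²/n))·(‖y‖_∞²/(‖y‖²/n))]. -/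
/-!
The error is `∑ i, F i` with `F i = γx y_i e_{x,i} + γy x_i e_{y,i} + γx γy e_{x,i} e_{y,i}`.
Distinct `F i` are independent and centred, hence orthogonal in `L²`, so the second moment of the
sum is `∑ i, 𝔼[F i ^ 2]`. Inside one coordinate the three terms are orthogonal as well, since each
cross term contains a centred variable to the first power times something independent of it;
hence `𝔼[F i ^ 2] = (γx y_i)² σ² + (γy x_i)² σ² + (γx γy)² σ⁴` with `σ² = 1/12`, the variance of
the uniform law on `[-1/2, 1/2)`.
-/

open MeasureTheory ProbabilityTheory Finset

namespace MeasureTheory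

theorem integral_sum_sq_of_orthogonal {α ι : Type*} [MeasurableSpace α] {μ : Measure α}
    (s : Finset ι) {G : ι → α → ℝ} (hG : ∀ i ∈ s, MemLp (G i) 2 μ)
    (horth : ∀ i ∈ s, ∀ j ∈ s, i ≠ j → ∫ a, G i a * G j a ∂μ = 0) :
    ∫ a, (∑ i ∈ s, G i a) ^ 2 ∂μ = ∑ i ∈ s, ∫ a, G i a ^ 2 ∂μ := by
  have hint : ∀ i ∈ s, ∀ j ∈ s, Integrable (fun a => G i a * G j a) μ :=
    fun i hi j hj => (hG i hi).integrable_mul (hG j hj)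
  calc ∫ a, (∑ i ∈ s, G i a) ^ 2 ∂μ = ∫ a, ∑ i ∈ s, ∑ j ∈ s, G i a * G j a ∂μ := by
        simp only [sq, sum_mul_sum]
    _ = ∑ i ∈ s, ∑ j ∈ s, ∫ a, G i a * G j a ∂μ := by
        rw [integral_finsetSum _ fun i hi => integrable_finsetSum _ (hint i hi)]
        exact sum_congr rfl fun i hi => integral_finsetSum _ (hint i hi)
    _ = ∑ i ∈ s, ∫ a, G i a ^ 2 ∂μ := by
        refine sum_congr rfl fun i hi => ?_
        rw [sum_eq_single_of_mem i hi fun j hj hji => horth i hi j hj hji.symm]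
        simp only [sq]

namespace pdf.IsUniform

variable {Ω : Type*} [MeasurableSpace Ω] {P : Measure Ω} {X : Ω → ℝ} {a b : ℝ}

theorem aemeasurable_Ico (hab : a < b) (hX : IsUniform X (Set.Ico a b) P) : AEMeasurable X P :=
  hX.aemeasurable (by simp [hab]) measure_Ico_lt_top.ne

theorem memLp_Ico [IsFiniteMeasure P] (hab : a < b) (hX : IsUniform X (Set.Ico a b) P)
    (p : ENNReal) : MemLp X p P := by
  have hmem : ∀ᵐ ω ∂P, X ω ∈ Set.Icc a b := by
    refine ae_of_ae_map (hX.aemeasurable_Ico hab) ?_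
    rw [hX]
    exact (ae_cond_mem measurableSet_Ico).mono fun _ h => Set.Ico_subset_Icc_self h
  exact memLp_of_bounded hmem (hX.aemeasurable_Ico hab).aestronglyMeasurable p

theorem integral_pow_Ico (hab : a < b) (hX : IsUniform X (Set.Ico a b) P) (k : ℕ) :
    ∫ ω, X ω ^ k ∂P = (b ^ (k + 1) - a ^ (k + 1)) / ((k + 1) * (b - a)) := by
  rw [← integral_map (f := fun t : ℝ => t ^ k) (hX.aemeasurable_Ico hab) (by fun_prop), hX,
    ProbabilityTheory.cond, integral_smul_measure, integral_Ico_eq_integral_Ioo,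
    ← integral_Ioc_eq_integral_Ioo, ← intervalIntegral.integral_of_le hab.le, integral_pow,
    Real.volume_Ico, ENNReal.toReal_inv, ENNReal.toReal_ofReal (sub_nonneg.2 hab.le), smul_eq_mul]
  field_simp

end pdf.IsUniform

end MeasureTheory

namespace ProbabilityTheory.IndepFun

variable {Ω : Type*} [MeasurableSpace Ω] {P : Measure Ω} {U V : Ω → ℝ}

theorem memLp_two_mul (hUV : IndepFun U V P) (hU : MemLp U 2 P)
    (hV : MemLp V 2 P) : MemLp (U * V) 2 P := by
  rw [memLp_two_iff_integrable_sq (hU.aestronglyMeasurable.mul hV.aestronglyMeasurable)]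
  simpa only [Pi.mul_def, Function.comp_def, id, mul_pow] using
    (hUV.comp (measurable_id.pow_const 2) (measurable_id.pow_const 2)).integrable_mul
      hU.integrable_sq hV.integrable_sq

theorem integral_mul_add_mul_add_mul [IsFiniteMeasure P]
    (hUV : IndepFun U V P) (hU : MemLp U 2 P) (hV : MemLp V 2 P) (hU0 : ∫ ω, U ω ∂P = 0)
    (hV0 : ∫ ω, V ω ∂P = 0) (a b c : ℝ) :
    ∫ ω, a * U ω + b * V ω + c * (U ω * V ω) ∂P = 0 := by
  have hU1 := (hU.integrable one_le_two).const_mul a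
  have hV1 := (hV.integrable one_le_two).const_mul b
  have hUV1 : Integrable (fun ω => c * (U ω * V ω)) P := (hU.integrable_mul hV).const_mul c
  rw [integral_add (f := fun ω => a * U ω + b * V ω) (hU1.add hV1) hUV1, integral_add hU1 hV1,
    integral_const_mul, integral_const_mul, integral_const_mul,
    hUV.integral_fun_mul_eq_mul_integral hU.aestronglyMeasurable hV.aestronglyMeasurable]
  simp [hU0, hV0]

theorem integral_sq_mul_add_mul_add_mul (hUV : IndepFun U V P)
    (hU : MemLp U 2 P) (hV : MemLp V 2 P) (hU0 : ∫ ω, U ω ∂P = 0) (hV0 : ∫ ω, V ω ∂P = 0)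
    (a b c : ℝ) :
    ∫ ω, (a * U ω + b * V ω + c * (U ω * V ω)) ^ 2 ∂P
      = a ^ 2 * ∫ ω, U ω ^ 2 ∂P + b ^ 2 * ∫ ω, V ω ^ 2 ∂P
        + c ^ 2 * (∫ ω, U ω ^ 2 ∂P) * ∫ ω, V ω ^ 2 ∂P := by
  have hmom (p q : ℕ) : ∫ ω, U ω ^ p * V ω ^ q ∂P = (∫ ω, U ω ^ p ∂P) * ∫ ω, V ω ^ q ∂P :=
    (hUV.comp (measurable_id.pow_const p) (measurable_id.pow_const q)
      ).integral_fun_mul_eq_mul_integral (hU.aestronglyMeasurable.pow p)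
      (hV.aestronglyMeasurable.pow q)
  let G : Fin 3 → Ω → ℝ := ![a • U, b • V, c • (U * V)]
  have hG : ∀ k ∈ univ, MemLp (G k) 2 P := by
    intro k _
    fin_cases k
    exacts [hU.const_smul a, hV.const_smul b, (hUV.memLp_two_mul hU hV).const_smul c]
  have hvanish (k : ℝ) (p q : ℕ) (hpq : p = 1 ∨ q = 1) {f : Ω → ℝ}
      (hf : ∀ ω, f ω = k * (U ω ^ p * V ω ^ q)) : ∫ ω, f ω ∂P = 0 := by
    rw [integral_congr_ae (.of_forall hf), integral_const_mul, hmom]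
    rcases hpq with rfl | rfl <;> simp [hU0, hV0]
  have horth : ∀ k ∈ univ, ∀ l ∈ univ, k ≠ l → ∫ ω, G k ω * G l ω ∂P = 0 := by
    intro k _ l _ hkl
    fin_cases k <;> fin_cases l <;>
      simp only [G, Matrix.cons_val', Matrix.cons_val_fin_one, Matrix.cons_val_zero,
        Matrix.cons_val_one, Matrix.cons_val, Pi.smul_apply, smul_eq_mul, Pi.mul_apply, Fin.isValue,
        Fin.zero_eta, Fin.mk_one, Fin.reduceFinMk, ne_eq, not_true_eq_false] at hkl ⊢
    · exact hvanish (a * b) 1 1 (.inl rfl) fun ω => by ring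
    · exact hvanish (a * c) 2 1 (.inr rfl) fun ω => by ring
    · exact hvanish (a * b) 1 1 (.inl rfl) fun ω => by ring
    · exact hvanish (b * c) 1 2 (.inl rfl) fun ω => by ring
    · exact hvanish (a * c) 2 1 (.inr rfl) fun ω => by ring
    · exact hvanish (b * c) 1 2 (.inl rfl) fun ω => by ring
  calc ∫ ω, (a * U ω + b * V ω + c * (U ω * V ω)) ^ 2 ∂P = ∫ ω, (∑ k, G k ω) ^ 2 ∂P := by
        simp [G, Fin.sum_univ_three]
    _ = _ := integral_sum_sq_of_orthogonal univ hG horth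
    _ = _ := by
        simp only [G, Fin.sum_univ_three, Matrix.cons_val', Matrix.cons_val_fin_one,
          Matrix.cons_val_zero, Matrix.cons_val_one, Matrix.cons_val, Pi.smul_apply, smul_eq_mul,
          Pi.mul_apply, mul_pow, integral_const_mul, hmom 2 2]
        ring

end ProbabilityTheory.IndepFun

theorem integral_sq_quantization_error {Ω ι : Type*} [MeasurableSpace Ω] [Fintype ι]
    {P : Measure Ω} [IsFiniteMeasure P]
    (x y : ι → ℝ) (γx γy : ℝ) {ex ey : ι → Ω → ℝ}
    (hindep : iIndepFun (Sum.elim ex ey) P)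
    (hex : ∀ i, MemLp (ex i) 2 P) (hey : ∀ i, MemLp (ey i) 2 P)
    (hex0 : ∀ i, ∫ ω, ex i ω ∂P = 0) (hey0 : ∀ i, ∫ ω, ey i ω ∂P = 0) :
    ∫ ω, (γx * (∑ i, ex i ω * y i) + γy * (∑ i, ey i ω * x i)
        + γx * γy * (∑ i, ex i ω * ey i ω)) ^ 2 ∂P
      = ∑ i, ((γx * y i) ^ 2 * ∫ ω, ex i ω ^ 2 ∂P + (γy * x i) ^ 2 * ∫ ω, ey i ω ^ 2 ∂P
          + (γx * γy) ^ 2 * (∫ ω, ex i ω ^ 2 ∂P) * ∫ ω, ey i ω ^ 2 ∂P) := by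
  let F : ι → Ω → ℝ := fun i ω =>
    γx * y i * ex i ω + γy * x i * ey i ω + γx * γy * (ex i ω * ey i ω)
  have hpair (i : ι) : IndepFun (ex i) (ey i) P :=
    hindep.indepFun (i := .inl i) (j := .inr i) Sum.inl_ne_inr
  have hF (i : ι) : MemLp (F i) 2 P :=
    (((hex i).const_mul _).add ((hey i).const_mul _)).add
      (((hpair i).memLp_two_mul (hex i) (hey i)).const_mul _)
  have hmeas : ∀ k, AEMeasurable (Sum.elim ex ey k) P := by
    rintro (i | i)
    exacts [(hex i).aestronglyMeasurable.aemeasurable, (hey i).aestronglyMeasurable.aemeasurable]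
  have horth (i j : ι) (hij : i ≠ j) : ∫ ω, F i ω * F j ω ∂P = 0 := by
    have hφ (k : ι) : Measurable fun p : ℝ × ℝ =>
        γx * y k * p.1 + γy * x k * p.2 + γx * γy * (p.1 * p.2) := by fun_prop
    have hFF : IndepFun (F i) (F j) P :=
      (hindep.indepFun_prodMk_prodMk₀ hmeas (.inl i) (.inr i) (.inl j) (.inr j)
        (by simpa using hij) Sum.inl_ne_inr Sum.inr_ne_inl (by simpa using hij)).comp
        (hφ i) (hφ j)
    rw [hFF.integral_fun_mul_eq_mul_integral (hF i).aestronglyMeasurable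
      (hF j).aestronglyMeasurable, (hpair i).integral_mul_add_mul_add_mul (hex i) (hey i)
      (hex0 i) (hey0 i), zero_mul]
  calc _ = ∫ ω, (∑ i, F i ω) ^ 2 ∂P := by
        congr with ω
        simp only [F, mul_sum, ← sum_add_distrib]
        congr! 2 with i
        ring
    _ = ∑ i, ∫ ω, F i ω ^ 2 ∂P :=
        integral_sum_sq_of_orthogonal univ (fun i _ => hF i) fun i _ j _ => horth i j
    _ = _ := sum_congr rfl fun i _ => (hpair i).integral_sq_mul_add_mul_add_mul (hex i) (hey i)
        (hex0 i) (hey0 i) _ _ _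

theorem sum_sq_ne_zero_of_ne_zero {ι : Type*} [Fintype ι] {x : ι → ℝ} (hx : x ≠ 0) :
    ∑ i, x i ^ 2 ≠ 0 := by
  simp_rw [sq, Ne, sum_mul_self_eq_zero_iff]
  simpa [funext_iff] using hx

theorem absmax_distortion_eq (N A B mx my : ℝ) (M : ℕ) (hN : N ≠ 0) (hA : A ≠ 0) (hB : B ≠ 0) :
    (2 ^ ((1 : ℤ) - M) * mx) ^ 2 / 12 * B + (2 ^ ((1 : ℤ) - M) * my) ^ 2 / 12 * A
        + N * (2 ^ ((1 : ℤ) - M) * mx) ^ 2 * (2 ^ ((1 : ℤ) - M) * my) ^ 2 / 144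
      = (A * B / N) * ((2 : ℝ) ^ (-(2 * M : ℤ)) / 3)
        * (mx ^ 2 / (A / N) + my ^ 2 / (B / N)
          + ((2 : ℝ) ^ (-(2 * M : ℤ)) / 3) * (mx ^ 2 / (A / N)) * (my ^ 2 / (B / N))) := by
  have hscale : ((2 : ℝ) ^ ((1 : ℤ) - M)) ^ 2 = 4 * 2 ^ (-(2 * M : ℤ)) := by
    rw [← zpow_natCast, ← zpow_mul,
      show ((1 : ℤ) - M) * (2 : ℕ) = 2 + -(2 * M : ℤ) by push_cast; ring, zpow_add₀ two_ne_zero]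
    norm_num
  rw [mul_pow, mul_pow, hscale]
  field_simp
  ring

theorem stmt_12_general (n : ℕ) (hn : 0 < n) (x y : Fin n → ℝ) (γx γy : ℝ)
    {Ω : Type*} [MeasurableSpace Ω] (P : Measure Ω) [IsProbabilityMeasure P]
    (ex ey : Fin n → Ω → ℝ)
    (hindep : iIndepFun (Sum.elim ex ey : Fin n ⊕ Fin n → Ω → ℝ) P)
    (hlaw : ∀ i, Measure.map (ex i) P
              = ProbabilityTheory.cond volume (Set.Ico (-(1 / 2) : ℝ) (1 / 2))
            ∧ Measure.map (ey i) P
              = ProbabilityTheory.cond volume (Set.Ico (-(1 / 2) : ℝ) (1 / 2))) :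
    (∫ ω, (γx * (∑ i, ex i ω * y i) + γy * (∑ i, ey i ω * x i)
            + γx * γy * (∑ i, ex i ω * ey i ω)) ^ 2 ∂P)
      = γx ^ 2 / 12 * (∑ i, y i ^ 2) + γy ^ 2 / 12 * (∑ i, x i ^ 2)
        + (n : ℝ) * γx ^ 2 * γy ^ 2 / 144
    ∧ (∀ M : ℕ, x ≠ 0 → y ≠ 0 →
        γx = (2 : ℝ) ^ ((1 : ℤ) - M) * (⨆ i, |x i|) →
        γy = (2 : ℝ) ^ ((1 : ℤ) - M) * (⨆ i, |y i|) →
        (∫ ω, (γx * (∑ i, ex i ω * y i) + γy * (∑ i, ey i ω * x i)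
                + γx * γy * (∑ i, ex i ω * ey i ω)) ^ 2 ∂P)
          = ((∑ i, x i ^ 2) * (∑ i, y i ^ 2) / (n : ℝ)) * ((2 : ℝ) ^ (-(2 * M : ℤ)) / 3)
            * ((⨆ i, |x i|) ^ 2 / ((∑ i, x i ^ 2) / (n : ℝ))
               + (⨆ i, |y i|) ^ 2 / ((∑ i, y i ^ 2) / (n : ℝ))
               + ((2 : ℝ) ^ (-(2 * M : ℤ)) / 3)
                 * ((⨆ i, |x i|) ^ 2 / ((∑ i, x i ^ 2) / (n : ℝ)))
                 * ((⨆ i, |y i|) ^ 2 / ((∑ i, y i ^ 2) / (n : ℝ))))) := by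
  have hab : (-(1 / 2) : ℝ) < 1 / 2 := by norm_num
  have hex (i : Fin n) : pdf.IsUniform (ex i) (Set.Ico (-(1 / 2)) (1 / 2)) P := (hlaw i).1
  have hey (i : Fin n) : pdf.IsUniform (ey i) (Set.Ico (-(1 / 2)) (1 / 2)) P := (hlaw i).2
  have hmean {e : Ω → ℝ} (he : pdf.IsUniform e (Set.Ico (-(1 / 2)) (1 / 2)) P) :
      ∫ ω, e ω ∂P = 0 := by
    simpa using he.integral_pow_Ico hab 1
  have hvar {e : Ω → ℝ} (he : pdf.IsUniform e (Set.Ico (-(1 / 2)) (1 / 2)) P) :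
      ∫ ω, e ω ^ 2 ∂P = 1 / 12 := by
    rw [he.integral_pow_Ico hab 2]
    norm_num
  have key := integral_sq_quantization_error x y γx γy hindep
    (fun i => (hex i).memLp_Ico hab 2) (fun i => (hey i).memLp_Ico hab 2)
    (fun i => hmean (hex i)) (fun i => hmean (hey i))
  simp only [hvar (hex _), hvar (hey _), sum_add_distrib, mul_pow, ← sum_mul, ← mul_sum,
    sum_const, card_univ, Fintype.card_fin, nsmul_eq_mul] at key
  refine ⟨key.trans (by ring), fun M hx hy hγx hγy => ?_⟩
  rw [key, hγx, hγy, ← absmax_distortion_eq _ _ _ _ _ M (by positivity)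
    (sum_sq_ne_zero_of_ne_zero hx) (sum_sq_ne_zero_of_ne_zero hy)]
  ring

/-- Fix `x, y ∈ ℝⁿ` and `γ_x, γ_y > 0`.  Let `e_x, e_y` be random
vectors whose `2n` coordinates are i.i.d. uniform on `[−1/2, 1/2)`.  Then
`𝔼[(γ_x e_xᵀy + γ_y e_yᵀx + γ_x γ_y e_xᵀe_y)²]
  = (γ_x²/12)‖y‖² + (γ_y²/12)‖x‖² + n γ_x² γ_y²/144`.
Consequently, for the INT-M absmax scales `γ_x = 2^{−(M−1)}‖x‖_∞`,
`γ_y = 2^{−(M−1)}‖y‖_∞` (with `x, y ≠ 0`), this expectation equals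
`(‖x‖²‖y‖²/n)(2^{−2M}/3)[Δx + Δy + (2^{−2M}/3)·Δx·Δy]` where
`Δx = ‖x‖∞²/(‖x‖²/n)` and `Δy = ‖y‖∞²/(‖y‖²/n)`. -/
theorem stmt_12 (n : ℕ) (hn : 0 < n) (x y : Fin n → ℝ) (γx γy : ℝ)
    (hγx : 0 < γx) (hγy : 0 < γy)
    {Ω : Type*} [MeasurableSpace Ω] (P : Measure Ω) [IsProbabilityMeasure P]
    (ex ey : Fin n → Ω → ℝ)
    (hmeas : ∀ i, Measurable (ex i) ∧ Measurable (ey i))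
    (hindep : iIndepFun (Sum.elim ex ey : Fin n ⊕ Fin n → Ω → ℝ) P)
    (hlaw : ∀ i, Measure.map (ex i) P
              = ProbabilityTheory.cond volume (Set.Ico (-(1 / 2) : ℝ) (1 / 2))
            ∧ Measure.map (ey i) P
              = ProbabilityTheory.cond volume (Set.Ico (-(1 / 2) : ℝ) (1 / 2))) :
    (∫ ω, (γx * (∑ i, ex i ω * y i) + γy * (∑ i, ey i ω * x i)
            + γx * γy * (∑ i, ex i ω * ey i ω)) ^ 2 ∂P)
      = γx ^ 2 / 12 * (∑ i, y i ^ 2) + γy ^ 2 / 12 * (∑ i, x i ^ 2)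
        + (n : ℝ) * γx ^ 2 * γy ^ 2 / 144
    ∧ (∀ M : ℕ, x ≠ 0 → y ≠ 0 →
        γx = (2 : ℝ) ^ ((1 : ℤ) - M) * (⨆ i, |x i|) →
        γy = (2 : ℝ) ^ ((1 : ℤ) - M) * (⨆ i, |y i|) →
        (∫ ω, (γx * (∑ i, ex i ω * y i) + γy * (∑ i, ey i ω * x i)
                + γx * γy * (∑ i, ex i ω * ey i ω)) ^ 2 ∂P)
          = ((∑ i, x i ^ 2) * (∑ i, y i ^ 2) / (n : ℝ)) * ((2 : ℝ) ^ (-(2 * M : ℤ)) / 3)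
            * ((⨆ i, |x i|) ^ 2 / ((∑ i, x i ^ 2) / (n : ℝ))
               + (⨆ i, |y i|) ^ 2 / ((∑ i, y i ^ 2) / (n : ℝ))
               + ((2 : ℝ) ^ (-(2 * M : ℤ)) / 3)
                 * ((⨆ i, |x i|) ^ 2 / ((∑ i, x i ^ 2) / (n : ℝ)))
                 * ((⨆ i, |y i|) ^ 2 / ((∑ i, y i ^ 2) / (n : ℝ))))) :=
  stmt_12_general n hn x y γx γy P ex ey hindep hlaw
end

section
/- Let λ_1,…,λ_n ≥ 0, Λ = diag(λ_1,…,λ_n), let V be a Haar-random orthogonal matrix in O(n), and set Σ = VᵀΛV. For k ∈ [n] let Σ^{(k)} be the k×k leading principal submatrix of Σ. Then 𝔼[ det Σ^{(k)} ] = (1/C(n,k)) · ∑_{S ⊆ [n], |S| = k} ∏_{i∈S} λ_i, i.e., the expected k-th leading principal minor equals the k-th elementary symmetric polynomial of the eigenvalues divided by the binomial coefficient C(n,k). -/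
open MeasureTheory ProbabilityTheory Matrix

/-- The `k × k` leading principal submatrix of an `n × n` matrix (`k ≤ n`). -/
def leadingMinor {n : ℕ} (A : Matrix (Fin n) (Fin n) ℝ) (k : ℕ) (hk : k ≤ n) :
    Matrix (Fin k) (Fin k) ℝ :=
  A.submatrix (Fin.castLE hk) (Fin.castLE hk)

/-!
Cauchy–Binet expands `det Σ⁽ᵏ⁾ = det (Ṽᵀ Λ Ṽ)`, with `Ṽ` the first `k` columns of `V`, as
`∑_{|S| = k} (∏_{i ∈ S} λᵢ) · det(Ṽ_S)²`. Permutation matrices are orthogonal, so the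
invariance of the law of `V` makes `𝔼[det(Ṽ_S)²]` independent of `S`; and since `ṼᵀṼ = 1`,
Cauchy–Binet with `Λ = 1` gives `∑_S det(Ṽ_S)² = 1`. Hence every `𝔼[det(Ṽ_S)²] = 1 / C(n, k)`.
-/

open Finset

theorem Finset.exists_perm_orderEmbOfFin_comp_eq {ι : Type*} [LinearOrder ι] {k : ℕ}
    {S : Finset ι} (h : #S = k) {f : Fin k → ι} (hf : Function.Injective f)
    (hfS : ∀ j, f j ∈ S) : ∃ σ : Equiv.Perm (Fin k), ⇑(S.orderEmbOfFin h) ∘ ⇑σ = f := by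
  let τ : Fin k → Fin k := fun j => (S.orderIsoOfFin h).symm ⟨f j, hfS j⟩
  have hτ : Function.Injective τ := fun a b hab => hf <| by
    simpa [τ] using congrArg (fun x => ((S.orderIsoOfFin h x : S) : ι)) hab
  refine ⟨Equiv.ofBijective τ (Finite.injective_iff_bijective.mp hτ), funext fun j => ?_⟩
  simp [τ, ← Finset.coe_orderIsoOfFin_apply]

theorem Finset.sum_injective_image_eq_sum_perm {ι M : Type*} [LinearOrder ι] [Fintype ι]
    [AddCommMonoid M] {k : ℕ} {S : Finset ι} (h : #S = k) (g : (Fin k → ι) → M) :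
    ∑ f : Fin k → ι with Function.Injective f ∧ image f univ = S, g f =
      ∑ σ : Equiv.Perm (Fin k), g (⇑(S.orderEmbOfFin h) ∘ ⇑σ) := by
  refine (sum_bij (fun (σ : Equiv.Perm (Fin k)) _ => ⇑(S.orderEmbOfFin h) ∘ ⇑σ)
    (fun σ _ => ?_) (fun σ _ τ _ hστ => ?_) (fun f hf => ?_) fun _ _ => rfl).symm
  · refine mem_filter.mpr ⟨mem_univ _, (S.orderEmbOfFin h).injective.comp σ.injective, ?_⟩
    rw [← image_image, image_univ_equiv, S.image_orderEmbOfFin_univ h]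
  · exact Equiv.ext fun j => (S.orderEmbOfFin h).injective (congrFun hστ j)
  · obtain ⟨hf, himage⟩ := (mem_filter.mp hf).2
    obtain ⟨σ, hσ⟩ := exists_perm_orderEmbOfFin_comp_eq h hf fun j =>
      himage ▸ mem_image_of_mem f (mem_univ j)
    exact ⟨σ, mem_univ σ, hσ⟩

namespace Matrix

section CauchyBinet

variable {ι R : Type*} [CommRing R]

theorem det_mul_eq_sum_det_submatrix_mul_prod {m : Type*} [Fintype m] [DecidableEq m]
    [Fintype ι] (A : Matrix m ι R) (B : Matrix ι m R) :
    (A * B).det = ∑ f : m → ι, (A.submatrix id f).det * ∏ j, B (f j) j := by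
  simp only [det_apply', mul_apply, prod_univ_sum, Fintype.piFinset_univ, mul_sum, sum_mul]
  rw [sum_comm]
  refine sum_congr rfl fun f _ => sum_congr rfl fun σ _ => ?_
  simp only [submatrix_apply, id_eq, prod_mul_distrib]
  ring

theorem det_submatrix_eq_zero_of_not_injective {m : Type*} [Fintype m] [DecidableEq m]
    (A : Matrix m ι R) {f : m → ι} (hf : ¬ Function.Injective f) :
    (A.submatrix id f).det = 0 := by
  obtain ⟨i, j, hfij, hij⟩ := Function.not_injective_iff.mp hf
  exact det_zero_of_column_eq hij fun r => by simp [hfij]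

variable [LinearOrder ι] {k : ℕ}

/-- The minor of `B` on the rows `S`, taken in increasing order; it is `0` unless `#S = k`. -/
noncomputable def rowMinor (B : Matrix ι (Fin k) R) (S : Finset ι) : R :=
  if h : #S = k then (B.submatrix (S.orderEmbOfFin h) id).det else 0

theorem rowMinor_submatrix_of_comp_eq (B : Matrix ι (Fin k) R) {σ : ι → ι} {S T : Finset ι}
    (hS : #S = k) (hT : #T = k) (hσ : ∀ j, σ (S.orderEmbOfFin hS j) = T.orderEmbOfFin hT j) :
    rowMinor (B.submatrix σ id) S = rowMinor B T := by
  simp only [rowMinor, dif_pos hS, dif_pos hT]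
  congr 1
  ext i j
  simp [hσ]

theorem rowMinor_diagonal_mul [Fintype ι] (d : ι → R) (B : Matrix ι (Fin k) R) (S : Finset ι) :
    rowMinor (diagonal d * B) S = (∏ i ∈ S, d i) * rowMinor B S := by
  by_cases h : #S = k
  · have hsub : (diagonal d * B).submatrix (S.orderEmbOfFin h) id =
        diagonal (d ∘ S.orderEmbOfFin h) * B.submatrix (S.orderEmbOfFin h) id := by
      ext i j
      simp [diagonal_mul]
    have hprod : ∏ j, d (S.orderEmbOfFin h j) = ∏ i ∈ S, d i := by
      conv_rhs => rw [← S.image_orderEmbOfFin_univ h]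
      exact (prod_image fun _ _ _ _ hab => (S.orderEmbOfFin h).injective hab).symm
    rw [rowMinor, rowMinor, dif_pos h, dif_pos h, hsub, det_mul, det_diagonal]
    simp only [Function.comp_apply, hprod]
  · simp [rowMinor, dif_neg h]

variable [Fintype ι]

theorem det_mul_eq_sum_rowMinor_mul_rowMinor (A : Matrix (Fin k) ι R) (B : Matrix ι (Fin k) R) :
    (A * B).det = ∑ S ∈ powersetCard k univ, rowMinor Aᵀ S * rowMinor B S := by
  set g : (Fin k → ι) → R := fun f => (A.submatrix id f).det * ∏ j, B (f j) j
  have hinj : ∑ f, g f = ∑ f with Function.Injective f, g f := by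
    refine (sum_filter_of_ne fun f _ hf => ?_).symm
    by_contra hinj
    exact hf (by simp only [g, det_submatrix_eq_zero_of_not_injective A hinj, zero_mul])
  have hmaps : ∀ f ∈ ({f | Function.Injective f} : Finset (Fin k → ι)),
      image f univ ∈ powersetCard k univ := fun f hf => by
    rw [mem_powersetCard_univ, card_image_of_injective _ (mem_filter.mp hf).2, card_univ,
      Fintype.card_fin]
  rw [det_mul_eq_sum_det_submatrix_mul_prod, hinj, ← sum_fiberwise_of_maps_to hmaps]
  refine sum_congr rfl fun S hS => ?_
  have h : #S = k := mem_powersetCard_univ.mp hS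
  have hA : ∀ σ : Equiv.Perm (Fin k), (A.submatrix id (S.orderEmbOfFin h ∘ σ)).det =
      Equiv.Perm.sign σ * (A.submatrix id (S.orderEmbOfFin h)).det := fun σ =>
    det_permute' σ (A.submatrix id (S.orderEmbOfFin h))
  rw [filter_filter, sum_injective_image_eq_sum_perm h, rowMinor, rowMinor, dif_pos h, dif_pos h,
    ← transpose_submatrix, det_transpose, det_apply' (B.submatrix _ id), mul_sum]
  refine sum_congr rfl fun σ _ => ?_
  simp only [g, hA, Function.comp_apply, submatrix_apply, id_eq]
  ring

theorem det_transpose_mul_diagonal_mul (B : Matrix ι (Fin k) R) (d : ι → R) :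
    (Bᵀ * diagonal d * B).det = ∑ S ∈ powersetCard k univ, (∏ i ∈ S, d i) * rowMinor B S ^ 2 := by
  rw [det_mul_eq_sum_rowMinor_mul_rowMinor, transpose_mul, diagonal_transpose, transpose_transpose]
  simp only [rowMinor_diagonal_mul, sq, mul_assoc]

theorem sum_rowMinor_sq_eq_one {B : Matrix ι (Fin k) R} (hB : Bᵀ * B = 1) :
    ∑ S ∈ powersetCard k univ, rowMinor B S ^ 2 = 1 := by
  simpa [hB] using (det_transpose_mul_diagonal_mul B 1).symm

theorem rowMinor_sq_le_one [LinearOrder R] [IsStrictOrderedRing R] {B : Matrix ι (Fin k) R}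
    (hB : Bᵀ * B = 1) (S : Finset ι) : rowMinor B S ^ 2 ≤ 1 := by
  by_cases hS : S ∈ powersetCard k univ
  · exact (single_le_sum (fun _ _ => sq_nonneg _) hS).trans_eq (sum_rowMinor_sq_eq_one hB)
  · have h : #S ≠ k := fun h => hS (mem_powersetCard_univ.mpr h)
    simp [rowMinor, dif_neg h]

end CauchyBinet

theorem permMatrix_mem_orthogonalGroup {n R : Type*} [Fintype n] [DecidableEq n]
    [CommRing R] (σ : Equiv.Perm n) : σ.permMatrix R ∈ orthogonalGroup n R := by
  rw [mem_orthogonalGroup_iff, transpose_permMatrix, ← permMatrix_mul, inv_mul_cancel,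
    permMatrix_one]

theorem transpose_mul_submatrix_eq_one {n m R : Type*} [Fintype n] [DecidableEq n]
    [Fintype m] [DecidableEq m] [CommRing R] {V : Matrix n n R} (hV : V ∈ orthogonalGroup n R)
    {c : m → n} (hc : Function.Injective c) :
    (V.submatrix id c)ᵀ * V.submatrix id c = 1 := by
  have hVV : Vᵀ * V = 1 := (mem_orthogonalGroup_iff' n R).mp hV
  rw [transpose_submatrix, ← submatrix_mul _ _ _ _ _ Function.bijective_id, hVV,
    submatrix_one _ hc]

end Matrix

theorem leadingMinor_transpose_mul_mul {n : ℕ} (V D : Matrix (Fin n) (Fin n) ℝ) {k : ℕ}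
    (hk : k ≤ n) :
    leadingMinor (Vᵀ * D * V) k hk =
      (V.submatrix id (Fin.castLE hk))ᵀ * D * V.submatrix id (Fin.castLE hk) := by
  rw [leadingMinor, submatrix_mul _ _ _ id _ Function.bijective_id,
    submatrix_mul _ _ _ id _ Function.bijective_id, transpose_submatrix]
  rfl

theorem integral_comp_perm_of_map_mul_eq {ι : Type*} [Fintype ι] [DecidableEq ι]
    {μ : Measure (ι → ι → ℝ)}
    (hinv : ∀ Q : Matrix ι ι ℝ, Q ∈ orthogonalGroup ι ℝ →
      Measure.map (fun V : ι → ι → ℝ => of.symm (Q * of V)) μ = μ)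
    (σ : Equiv.Perm ι) (F : (ι → ι → ℝ) → ℝ) :
    ∫ V, F (V ∘ σ) ∂μ = ∫ V, F V ∂μ := by
  let e := MeasurableEquiv.piCongrLeft (fun _ : ι => ι → ℝ) σ.symm
  have he : ∀ V, e V = V ∘ σ := fun V => funext fun i => by
    simp [e, MeasurableEquiv.coe_piCongrLeft, Equiv.piCongrLeft_apply_eq_cast]
  have hmap : Measure.map e μ = μ := by
    convert hinv _ (permMatrix_mem_orthogonalGroup σ) using 2
    funext V
    rw [he, PEquiv.toMatrix_toPEquiv_mul]
    rfl
  simp_rw [← he]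
  rw [← integral_map_equiv e F, hmap]

section HaarOrthogonal

variable {ι : Type*} [LinearOrder ι] [Fintype ι] {μ : Measure (ι → ι → ℝ)} {k : ℕ}

omit [Fintype ι] in
theorem continuous_rowMinor_submatrix (c : Fin k → ι) (S : Finset ι) :
    Continuous fun V : ι → ι → ℝ => rowMinor ((of V).submatrix id c) S := by
  unfold rowMinor
  split_ifs
  · fun_prop
  · exact continuous_const

theorem integrable_rowMinor_sq [IsFiniteMeasure μ]
    (hsupp : ∀ᵐ V ∂μ, of V ∈ orthogonalGroup ι ℝ) {c : Fin k → ι} (hc : Function.Injective c)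
    (S : Finset ι) : Integrable (fun V => rowMinor ((of V).submatrix id c) S ^ 2) μ := by
  refine Integrable.mono' (integrable_const 1)
    ((continuous_rowMinor_submatrix c S).pow 2).aestronglyMeasurable (hsupp.mono fun V hV => ?_)
  rw [Real.norm_eq_abs, abs_of_nonneg (sq_nonneg _)]
  exact rowMinor_sq_le_one (transpose_mul_submatrix_eq_one hV hc) S

theorem integral_rowMinor_sq_eq_of_card_eq
    (hinv : ∀ Q : Matrix ι ι ℝ, Q ∈ orthogonalGroup ι ℝ →
      Measure.map (fun V : ι → ι → ℝ => of.symm (Q * of V)) μ = μ)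
    (c : Fin k → ι) {S T : Finset ι} (hS : #S = k) (hT : #T = k) :
    ∫ V, rowMinor ((of V).submatrix id c) S ^ 2 ∂μ =
      ∫ V, rowMinor ((of V).submatrix id c) T ^ 2 ∂μ := by
  obtain ⟨σ, hσ⟩ := Equiv.Perm.exists_extending_pair _ _
    (S.orderEmbOfFin hS).injective (T.orderEmbOfFin hT).injective
  rw [← integral_comp_perm_of_map_mul_eq hinv σ]
  congr with V
  exact congrArg (· ^ 2) (rowMinor_submatrix_of_comp_eq ((of V).submatrix id c) hS hT hσ)

theorem integral_rowMinor_sq_eq_inv_choose [IsProbabilityMeasure μ]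
    (hsupp : ∀ᵐ V ∂μ, of V ∈ orthogonalGroup ι ℝ)
    (hinv : ∀ Q : Matrix ι ι ℝ, Q ∈ orthogonalGroup ι ℝ →
      Measure.map (fun V : ι → ι → ℝ => of.symm (Q * of V)) μ = μ)
    {c : Fin k → ι} (hc : Function.Injective c) {S : Finset ι} (hS : S ∈ powersetCard k univ) :
    ∫ V, rowMinor ((of V).submatrix id c) S ^ 2 ∂μ = 1 / (Fintype.card ι).choose k := by
  have hsum : ∑ T ∈ powersetCard k univ, ∫ V, rowMinor ((of V).submatrix id c) T ^ 2 ∂μ = 1 := by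
    rw [← integral_finsetSum _ fun T _ => integrable_rowMinor_sq hsupp hc T,
      integral_congr_ae (hsupp.mono fun V hV =>
        sum_rowMinor_sq_eq_one (transpose_mul_submatrix_eq_one hV hc)),
      integral_const, probReal_univ, one_smul]
  rw [sum_congr rfl fun T hT => integral_rowMinor_sq_eq_of_card_eq hinv c
      (mem_powersetCard_univ.mp hT) (mem_powersetCard_univ.mp hS), sum_const, card_powersetCard,
    card_univ, nsmul_eq_mul] at hsum
  exact eq_one_div_of_mul_eq_one_right hsum

end HaarOrthogonal

theorem stmt_17_general (n : ℕ) (lam : Fin n → ℝ)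
    (μ : Measure (Fin n → Fin n → ℝ)) [IsProbabilityMeasure μ]
    (hsupp : ∀ᵐ V ∂μ, Matrix.of V ∈ Matrix.orthogonalGroup (Fin n) ℝ)
    (hinv : ∀ Q : Matrix (Fin n) (Fin n) ℝ, Q ∈ Matrix.orthogonalGroup (Fin n) ℝ →
      Measure.map (fun V : Fin n → Fin n → ℝ => Matrix.of.symm (Q * Matrix.of V)) μ = μ)
    (k : ℕ) (hk : k ≤ n) :
    (∫ V : Fin n → Fin n → ℝ,
        (leadingMinor ((Matrix.of V)ᵀ * Matrix.diagonal lam * Matrix.of V) k hk).det ∂μ)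
      = (1 / (n.choose k : ℝ)) *
          ∑ S ∈ Finset.powersetCard k (Finset.univ : Finset (Fin n)), ∏ i ∈ S, lam i := by
  have hc := Fin.castLE_injective hk
  simp_rw [leadingMinor_transpose_mul_mul, det_transpose_mul_diagonal_mul]
  rw [integral_finsetSum _ fun S _ => (integrable_rowMinor_sq hsupp hc S).const_mul _, mul_sum]
  refine sum_congr rfl fun S hS => ?_
  rw [integral_const_mul, integral_rowMinor_sq_eq_inv_choose hsupp hinv hc hS, Fintype.card_fin,
    mul_comm]

/-- Let `λ₁,…,λₙ ≥ 0`, `Λ = diag(λ)`, let `V` be Haar-random on `O(n)`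
(law: a probability measure concentrated on the orthogonal group, invariant under left
multiplication by any orthogonal matrix) and `Σ = Vᵀ Λ V`.  Then for `k ∈ [n]`,
`𝔼[det Σ^{(k)}] = (1/C(n,k)) ∑_{|S|=k} ∏_{i∈S} λᵢ`. -/
theorem stmt_17 (n : ℕ) (lam : Fin n → ℝ) (hlam : ∀ i, 0 ≤ lam i)
    (μ : Measure (Fin n → Fin n → ℝ)) [IsProbabilityMeasure μ]
    (hsupp : ∀ᵐ V ∂μ, Matrix.of V ∈ Matrix.orthogonalGroup (Fin n) ℝ)
    (hinv : ∀ Q : Matrix (Fin n) (Fin n) ℝ, Q ∈ Matrix.orthogonalGroup (Fin n) ℝ →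
      Measure.map (fun V : Fin n → Fin n → ℝ => Matrix.of.symm (Q * Matrix.of V)) μ = μ)
    (k : ℕ) (hk1 : 1 ≤ k) (hk : k ≤ n) :
    (∫ V : Fin n → Fin n → ℝ,
        (leadingMinor ((Matrix.of V)ᵀ * Matrix.diagonal lam * Matrix.of V) k hk).det ∂μ)
      = (1 / (n.choose k : ℝ)) *
          ∑ S ∈ Finset.powersetCard k (Finset.univ : Finset (Fin n)), ∏ i ∈ S, lam i :=
  stmt_17_general n lam μ hsupp hinv k hk
end
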